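/- arXiv:2404.00263 — 3 statements merged into one kernel-verified Lean document; each statement's English description precedes it below -/
import Mathlib

section
/- Let P be a maximal ranked poset of rank n and let I and J be poset ideals of P with I ≠ J. Then the pair {I, J} belongs to E*_O(P) if and only if one of the two ideals is the empty set and the other one, say J, is connected in P and has at least two maximal elements (|max(J)| ≥ 2). -/
open Finset
open scoped Classical

variable (P : Type*) [Fintype P] [PartialOrder P]

/-- The comparability graph of a poset. -/
def compGraph : SimpleGraph P where
  Adj x y := x ≠ y ∧ (x ≤ y ∨ y ≤ x)
  symm := ⟨fun _ _ h => ⟨h.1.symm, h.2.symm⟩⟩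
  loopless := ⟨fun _ h => h.1 rfl⟩

/-- A subset `W` of `P` is connected in `P` if the subgraph of the comparability
graph induced on `W` is connected (this includes `W` being nonempty). -/
def ConnIn (W : Set P) : Prop :=
  (SimpleGraph.induce W (compGraph P)).Connected

/-- A poset ideal (down-set). -/
def IsIdealF (I : Finset P) : Prop :=
  ∀ ⦃x y : P⦄, x ∈ I → y ≤ x → y ∈ I

/-- An antichain of the poset. -/
def IsAntichainF (A : Finset P) : Prop :=
  IsAntichain (· ≤ ·) (↑A : Set P)

/-- The 0/1 indicator vector of a subset of `P`. -/
noncomputable def rho (W : Finset P) : P → ℝ :=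
  fun x => if x ∈ W then 1 else 0

/-- The order polytope of `P`. -/
def orderPolytope : Set (P → ℝ) :=
  {f | (∀ x, 0 ≤ f x ∧ f x ≤ 1) ∧ ∀ ⦃x y : P⦄, x ≤ y → f y ≤ f x}

/-- The chain polytope of `P`. -/
def chainPolytope : Set (P → ℝ) :=
  {f | (∀ x, 0 ≤ f x) ∧ ∀ s : Finset P, IsChain (· ≤ ·) (↑s : Set P) → ∑ x ∈ s, f x ≤ 1}

/-- `conv {u, v}` is an edge (1-dimensional exposed face) of the polytope `S`. -/
def IsEdgeOf (S : Set (P → ℝ)) (u v : P → ℝ) : Prop :=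
  u ≠ v ∧ IsExposed ℝ S (convexHull ℝ {u, v})

/-- `conv {u, v, w}` is a triangular 2-face of the polytope `S`. -/
def IsTriFaceOf (S : Set (P → ℝ)) (u v w : P → ℝ) : Prop :=
  u ≠ v ∧ u ≠ w ∧ v ≠ w ∧ IsExposed ℝ S (convexHull ℝ {u, v, w})

/-- The set of maximal elements of a subset of `P`. -/
noncomputable def maxSet (W : Finset P) : Finset P :=
  W.filter (fun x => ∀ y ∈ W, ¬ x < y)

/-- The set of minimal elements of a subset of `P`. -/
noncomputable def minSet (W : Finset P) : Finset P :=
  W.filter (fun x => ∀ y ∈ W, ¬ y < x)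

/-- The poset ideal generated by a subset of `P`. -/
noncomputable def genIdeal (A : Finset P) : Finset P :=
  univ.filter (fun x => ∃ a ∈ A, x ≤ a)

/-- The pair `{I, J}` belongs to `E*_O(P)`. -/
noncomputable def EstarO (I J : Finset P) : Prop :=
  IsIdealF P I ∧ IsIdealF P J ∧ I ≠ J ∧
    IsEdgeOf P (orderPolytope P) (rho P I) (rho P J) ∧
    ¬ IsEdgeOf P (chainPolytope P) (rho P (maxSet P I)) (rho P (maxSet P J))

/-- The pair `{A, B}` belongs to `E*_C(P)`. -/
noncomputable def EstarC (A B : Finset P) : Prop :=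
  IsAntichainF P A ∧ IsAntichainF P B ∧ A ≠ B ∧
    IsEdgeOf P (chainPolytope P) (rho P A) (rho P B) ∧
    ¬ IsEdgeOf P (orderPolytope P) (rho P (genIdeal P A)) (rho P (genIdeal P B))

/-- `Δ_O(P)`: unordered triples of pairwise distinct poset ideals spanning a
triangular 2-face of the order polytope. -/
def DeltaO : Set (Finset (Finset P)) :=
  {T | ∃ I J K : Finset P, T = {I, J, K} ∧ I ≠ J ∧ I ≠ K ∧ J ≠ K ∧
    IsIdealF P I ∧ IsIdealF P J ∧ IsIdealF P K ∧
    IsTriFaceOf P (orderPolytope P) (rho P I) (rho P J) (rho P K)}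

/-- `Δ_C(P)`: unordered triples of pairwise distinct antichains spanning a
triangular 2-face of the chain polytope. -/
def DeltaC : Set (Finset (Finset P)) :=
  {T | ∃ A B C : Finset P, T = {A, B, C} ∧ A ≠ B ∧ A ≠ C ∧ B ≠ C ∧
    IsAntichainF P A ∧ IsAntichainF P B ∧ IsAntichainF P C ∧
    IsTriFaceOf P (chainPolytope P) (rho P A) (rho P B) (rho P C)}

/-- `Δ*_O(P)`: triples in `Δ_O(P)` at least one of whose pairs lies in `E*_O(P)`. -/
def DeltaStarO : Set (Finset (Finset P)) :=
  {T | T ∈ DeltaO P ∧ ∃ I ∈ T, ∃ J ∈ T, I ≠ J ∧ EstarO P I J}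

/-- `Δ*_C(P)`: triples in `Δ_C(P)` at least one of whose pairs lies in `E*_C(P)`. -/
def DeltaStarC : Set (Finset (Finset P)) :=
  {T | T ∈ DeltaC P ∧ ∃ A ∈ T, ∃ B ∈ T, A ≠ B ∧ EstarC P A B}

/-- `r` is a rank function exhibiting `P` as a maximal ranked poset of rank `n`:
`r` is surjective onto `{0, …, n}` and `x < y ↔ r x < r y`. -/
def IsMaxRanked (r : P → ℕ) (n : ℕ) : Prop :=
  (∀ x, r x ≤ n) ∧ (∀ i, i ≤ n → ∃ x, r x = i) ∧ (∀ x y : P, x < y ↔ r x < r y)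

/-- The rank level `P_i`. -/
noncomputable def level (r : P → ℕ) (i : ℕ) : Finset P :=
  univ.filter (fun x => r x = i)

/-- `P` contains an `X`-poset as a subposet. -/
def ContainsX : Prop :=
  ∃ a b c d e : P,
    a ≠ b ∧ a ≠ c ∧ a ≠ d ∧ a ≠ e ∧ b ≠ c ∧ b ≠ d ∧ b ≠ e ∧ c ≠ d ∧ c ≠ e ∧ d ≠ e ∧
    a < c ∧ b < c ∧ c < d ∧ c < e ∧ ¬ a ≤ b ∧ ¬ b ≤ a ∧ ¬ d ≤ e ∧ ¬ e ≤ d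

/-
Both polytopes are cut out by linear inequalities, and their edges between 0/1-vertices are
detected in two ways. A segment `[ρ A, ρ B]` is an exposed face as soon as some sum of defining
inequalities is tight exactly on it; conversely, if `ρ K + ρ L = ρ A + ρ B` for two vertices
`ρ K, ρ L`, then the common midpoint forces `ρ K` onto the edge, so `K = A` or `K = B`. Taking
`K = I ∪ J` resp. `K = I ∪ U` for a comparability-closed `U ⊂ J \ I`, an edge of `O(P)` needs
`I ⊆ J` (or the reverse) with `J \ I` connected, and this suffices for an edge; likewise
`[ρ A, ρ B]` is an edge of `C(P)` whenever `A △ B` is connected.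

In a maximal ranked poset `max I` is the top rank level of `I`, and elements of different ranks
are comparable. So for ideals `I ⊊ J` with `J \ I` connected, `max I △ max J` is connected: it
meets two ranks, or it equals `J \ I` when the top ranks agree, or it is a single point when
`I = ∅` and `|max J| = 1`. In the remaining case `I = ∅`, `|max J| ≥ 2`, splitting `max J` into
`{b}` and the rest shows that `[0, ρ(max J)]` is not an edge of `C(P)`.
-/

theorem isExposed_segment_of_tight {E : Type*} [AddCommGroup E] [Module ℝ E]
    [TopologicalSpace E] {S : Set E} (hS : Convex ℝ S) {u v : E} (hu : u ∈ S) (hv : v ∈ S)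
    {ι : Type*} (s : Finset ι) (φ : ι → StrongDual ℝ E) (c : ι → ℝ)
    (hle : ∀ f ∈ S, ∀ i ∈ s, φ i f ≤ c i) (hu' : ∀ i ∈ s, φ i u = c i)
    (hv' : ∀ i ∈ s, φ i v = c i) (htight : ∀ f ∈ S, (∀ i ∈ s, φ i f = c i) → f ∈ segment ℝ u v) :
    IsExposed ℝ S (segment ℝ u v) := by
  set l := ∑ i ∈ s, φ i
  have hl : ∀ f, l f = ∑ i ∈ s, φ i f := fun f ↦ by simp [l]
  have hlu : l u = ∑ i ∈ s, c i := (hl u).trans (Finset.sum_congr rfl hu')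
  have hlv : l v = ∑ i ∈ s, c i := (hl v).trans (Finset.sum_congr rfl hv')
  have hlS : ∀ f ∈ S, l f ≤ l u := fun f hf ↦ hlu ▸ hl f ▸ Finset.sum_le_sum (hle f hf)
  refine fun _ ↦ ⟨l, Set.Subset.antisymm (fun f hf ↦ ⟨hS.segment_subset hu hv hf, ?_⟩) ?_⟩
  · obtain ⟨a, b, -, -, hab, rfl⟩ := hf
    intro g hg
    simpa [hlv ▸ hlu, ← add_mul, hab] using hlS g hg
  · rintro f ⟨hf, hfmax⟩
    refine htight f hf ((Finset.sum_eq_sum_iff_of_le (hle f hf)).1 ?_)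
    rw [← hl, ← hlu]
    exact le_antisymm (hlS f hf) (hfmax u hu)

def coordCLM {α : Type*} (x : α) : StrongDual ℝ (α → ℝ) :=
  ContinuousLinearMap.proj x

@[simp]
theorem coordCLM_apply {α : Type*} (x : α) (f : α → ℝ) : coordCLM x f = f x :=
  rfl

section
variable {α : Type*}

theorem rho_injective : Function.Injective (rho α) := by
  intro A B h
  ext x
  have := congrFun h x
  by_cases hA : x ∈ A <;> by_cases hB : x ∈ B <;> simp_all [rho]

theorem rho_union_add_rho_inter (A B : Finset α) :
    rho α (A ∪ B) + rho α (A ∩ B) = rho α A + rho α B := by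
  funext x
  by_cases hA : x ∈ A <;> by_cases hB : x ∈ B <;> simp [rho, hA, hB]

theorem eq_or_eq_of_rho_mem_segment {A B K : Finset α} (hAB : A ≠ B)
    (hK : rho α K ∈ segment ℝ (rho α A) (rho α B)) : K = A ∨ K = B := by
  obtain ⟨a, b, -, -, hab, hK⟩ := hK
  obtain ⟨x, hx⟩ := Finset.symmDiff_nonempty.2 hAB
  have hKx := congrFun hK x
  have key : a = 0 ∨ a = 1 := by
    rcases Finset.mem_symmDiff.1 hx with ⟨hA, hB⟩ | ⟨hB, hA⟩ <;>
      by_cases hxK : x ∈ K <;> simp [rho, hA, hB, hxK] at hKx <;> grind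
  rcases key with rfl | rfl
  · right; apply rho_injective; simpa [show b = 1 by linarith] using hK.symm
  · left; apply rho_injective; simpa [show b = 0 by linarith] using hK.symm

theorem IsEdgeOf.symm {S : Set (α → ℝ)} {u v : α → ℝ} (h : IsEdgeOf α S u v) :
    IsEdgeOf α S v u :=
  ⟨h.1.symm, Set.pair_comm u v ▸ h.2⟩

theorem IsEdgeOf.ne {S : Set (α → ℝ)} {A B : Finset α} (h : IsEdgeOf α S (rho α A) (rho α B)) :
    A ≠ B :=
  fun hAB ↦ h.1 (hAB ▸ rfl)

theorem IsEdgeOf.eq_or_eq_of_rho_add_rho {S : Set (α → ℝ)} {A B K L : Finset α}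
    (hE : IsEdgeOf α S (rho α A) (rho α B)) (hK : rho α K ∈ S) (hL : rho α L ∈ S)
    (hsum : rho α K + rho α L = rho α A + rho α B) : K = A ∨ K = B := by
  have hseg : (1/2 : ℝ) • (rho α A + rho α B) ∈ segment ℝ (rho α A) (rho α B) :=
    ⟨1/2, 1/2, by norm_num, by norm_num, by norm_num, by rw [smul_add]⟩
  have hopen : (1/2 : ℝ) • (rho α A + rho α B) ∈ openSegment ℝ (rho α K) (rho α L) :=
    ⟨1/2, 1/2, by norm_num, by norm_num, by norm_num, by rw [← smul_add, hsum]⟩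
  have hexp := hE.2
  rw [convexHull_pair] at hexp
  exact eq_or_eq_of_rho_mem_segment hE.ne
    (hexp.isExtreme.left_mem_of_mem_openSegment hK hL hseg hopen)

theorem mem_segment_rho {A B : Finset α} {f : α → ℝ} {t : ℝ} (ht₀ : 0 ≤ t) (ht₁ : t ≤ 1)
    (hAB : ∀ x ∈ A, x ∈ B → f x = 1) (hA : ∀ x ∈ A, x ∉ B → f x = t)
    (hB : ∀ x ∈ B, x ∉ A → f x = 1 - t) (hout : ∀ x ∉ A, x ∉ B → f x = 0) :
    f ∈ segment ℝ (rho α A) (rho α B) := by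
  refine ⟨t, 1 - t, ht₀, by linarith, by ring, funext fun x ↦ ?_⟩
  by_cases hxA : x ∈ A <;> by_cases hxB : x ∈ B <;> simp [rho, hxA, hxB, hAB, hA, hB, hout]

end

section
variable {α : Type*} [PartialOrder α]

theorem isIdealF_empty : IsIdealF α ∅ := fun _ _ hx ↦ absurd hx (Finset.notMem_empty _)

theorem IsIdealF.union {I J : Finset α} (hI : IsIdealF α I) (hJ : IsIdealF α J) :
    IsIdealF α (I ∪ J) := by
  intro x y hx hyx
  simp only [Finset.mem_union] at hx ⊢
  exact hx.imp (hI · hyx) (hJ · hyx)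

theorem IsIdealF.inter {I J : Finset α} (hI : IsIdealF α I) (hJ : IsIdealF α J) :
    IsIdealF α (I ∩ J) := by
  intro x y hx hyx
  simp only [Finset.mem_inter] at hx ⊢
  exact ⟨hI hx.1 hyx, hJ hx.2 hyx⟩

theorem convex_orderPolytope : Convex ℝ (orderPolytope α) := by
  rintro f ⟨hf, hf'⟩ g ⟨hg, hg'⟩ a b ha hb hab
  refine ⟨fun x ↦ ?_, fun x y hxy ↦ ?_⟩
  · have := hf x; have := hg x
    simp only [Pi.add_apply, Pi.smul_apply, smul_eq_mul]
    constructor <;> nlinarith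
  · have := hf' hxy; have := hg' hxy
    simp only [Pi.add_apply, Pi.smul_apply, smul_eq_mul]
    nlinarith

theorem convex_chainPolytope : Convex ℝ (chainPolytope α) := by
  rintro f ⟨hf, hf'⟩ g ⟨hg, hg'⟩ a b ha hb hab
  refine ⟨fun x ↦ ?_, fun s hs ↦ ?_⟩
  · have := hf x; have := hg x
    simp only [Pi.add_apply, Pi.smul_apply, smul_eq_mul]
    positivity
  · have := hf' s hs; have := hg' s hs
    simp only [Pi.add_apply, Pi.smul_apply, smul_eq_mul, Finset.sum_add_distrib,
      ← Finset.mul_sum]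
    nlinarith

theorem rho_mem_orderPolytope {I : Finset α} (hI : IsIdealF α I) :
    rho α I ∈ orderPolytope α := by
  refine ⟨fun x ↦ by by_cases hx : x ∈ I <;> simp [rho, hx], fun x y hxy ↦ ?_⟩
  by_cases hy : y ∈ I
  · simp [rho, hy, hI hy hxy]
  · by_cases hx : x ∈ I <;> simp [rho, hx, hy]

theorem rho_mem_chainPolytope {A : Finset α} (hA : IsAntichainF α A) :
    rho α A ∈ chainPolytope α := by
  refine ⟨fun x ↦ by by_cases hx : x ∈ A <;> simp [rho, hx], fun s hs ↦ ?_⟩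
  have hsub := inter_subsingleton_of_isChain_of_isAntichain hs hA
  have hcard : (s ∩ A).card ≤ 1 :=
    Finset.card_le_one.2 fun a ha b hb ↦ hsub (by exact_mod_cast ha) (by exact_mod_cast hb)
  simpa [rho, Finset.sum_boole] using hcard

theorem le_one_of_mem_chainPolytope {f : α → ℝ} (hf : f ∈ chainPolytope α) (x : α) : f x ≤ 1 := by
  simpa using hf.2 {x} (by simp)

theorem add_le_one_of_mem_chainPolytope {f : α → ℝ} (hf : f ∈ chainPolytope α) {x y : α}
    (hne : x ≠ y) (hxy : x ≤ y ∨ y ≤ x) : f x + f y ≤ 1 := by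
  have hchain : IsChain (· ≤ ·) (↑({x, y} : Finset α) : Set α) := by
    rw [Finset.coe_pair]
    rcases hxy with h | h
    · exact IsChain.pair h
    · rw [Set.pair_comm]; exact IsChain.pair h
  simpa [Finset.sum_pair hne] using hf.2 _ hchain

theorem ConnIn.apply_eq {W : Set α} (hW : ConnIn α W) {β : Type*} {f : α → β}
    (hf : ∀ x ∈ W, ∀ y ∈ W, x < y → f x = f y) {x y : α} (hx : x ∈ W) (hy : y ∈ W) :
    f x = f y := by
  have hadj : ((compGraph α).induce W).Adj ≤ fun u v : W ↦ f u = f v := by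
    rintro ⟨u, hu⟩ ⟨v, hv⟩ ⟨hne, huv | hvu⟩
    · exact hf u hu v hv (huv.lt_of_ne hne)
    · exact (hf v hv u hu (hvu.lt_of_ne hne.symm)).symm
  have := ((SimpleGraph.reachable_iff_reflTransGen _ _).1
    (hW.preconnected ⟨x, hx⟩ ⟨y, hy⟩)).lift _ hadj
  rwa [Relation.reflTransGen_eq_self] at this

theorem connIn_singleton (a : α) : ConnIn α {a} :=
  have : Nonempty ({a} : Set α) := ⟨⟨a, rfl⟩⟩
  ⟨SimpleGraph.Preconnected.of_subsingleton⟩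

theorem connIn_of_forall_exists_comparable {W : Finset α} (hne : W.Nonempty)
    (h : ∀ U ⊆ W, U.Nonempty → U ≠ W → ∃ x ∈ U, ∃ y ∈ W \ U, x ≤ y ∨ y ≤ x) :
    ConnIn α ↑W := by
  set G := (compGraph α).induce (↑W : Set α)
  obtain ⟨w, hw⟩ := hne
  let U := W.filter fun x ↦ ∃ hx : x ∈ (↑W : Set α), G.Reachable ⟨w, hw⟩ ⟨x, hx⟩
  have hU : U = W := by
    by_contra hUW
    obtain ⟨x, hxU, y, hyWU, hxy⟩ :=
      h U (Finset.filter_subset _ _) ⟨w, by simp [U, hw]⟩ hUW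
    obtain ⟨hyW, hyU⟩ := Finset.mem_sdiff.1 hyWU
    obtain ⟨-, hxW, hreach⟩ := Finset.mem_filter.1 hxU
    have hadj : G.Adj ⟨x, hxW⟩ ⟨y, hyW⟩ :=
      ⟨fun hxy' ↦ hyU (by rwa [← show x = y from hxy']), hxy⟩
    exact hyU (Finset.mem_filter.2 ⟨hyW, hyW, hreach.trans hadj.reachable⟩)
  have hreach : ∀ z : (↑W : Set α), G.Reachable ⟨w, hw⟩ z := by
    rintro ⟨z, hz⟩
    obtain ⟨-, _, hz'⟩ := Finset.mem_filter.1 (hU ▸ hz : z ∈ U)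
    exact hz'
  have : Nonempty (↑W : Set α) := ⟨⟨w, hw⟩⟩
  exact ⟨fun u v ↦ (hreach u).symm.trans (hreach v)⟩

theorem connIn_of_rank_ne {β : Type*} [LinearOrder β] {r : α → β}
    (hr : ∀ x y : α, x < y ↔ r x < r y) {W : Set α} {a b : α} (ha : a ∈ W) (hb : b ∈ W)
    (hab : r a ≠ r b) : ConnIn α W := by
  set G := (compGraph α).induce W
  have hadj : ∀ {x y : W}, r x ≠ r y → G.Adj x y := by
    intro x y hxy
    refine ⟨fun h ↦ hxy (congrArg r (h : (x : α) = y)), ?_⟩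
    rcases hxy.lt_or_gt with h | h
    · exact .inl ((hr _ _).2 h).le
    · exact .inr ((hr _ _).2 h).le
  have hreach : ∀ z : W, G.Reachable z ⟨a, ha⟩ := by
    intro z
    by_cases hza : r z = r a
    · exact (hadj (hza ▸ hab : r z ≠ r b) : G.Adj z ⟨b, hb⟩).reachable.trans
        (hadj hab.symm).reachable
    · exact (hadj hza).reachable
  have : Nonempty W := ⟨⟨a, ha⟩⟩
  exact ⟨fun u v ↦ (hreach u).trans (hreach v).symm⟩

theorem mem_segment_rho_of_connIn_sdiff {I J : Finset α} (hIJ : I ⊆ J)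
    (hconn : ConnIn α ↑(J \ I)) {f : α → ℝ} (hf : ∀ x, 0 ≤ f x ∧ f x ≤ 1)
    (hI : ∀ x ∈ I, f x = 1) (hout : ∀ x ∉ J, f x = 0)
    (hconst : ∀ x ∈ J \ I, ∀ y ∈ J \ I, x < y → f x = f y) :
    f ∈ segment ℝ (rho α I) (rho α J) := by
  obtain ⟨⟨w, hw⟩⟩ := hconn.nonempty
  refine mem_segment_rho (t := 1 - f w) (by linarith [hf w]) (by linarith [hf w])
    (fun x hx _ ↦ hI x hx) (fun x hx hxJ ↦ absurd (hIJ hx) hxJ) (fun x hxJ hxI ↦ ?_)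
    (fun x _ hxJ ↦ hout x hxJ)
  rw [sub_sub_cancel]
  exact hconn.apply_eq hconst (by simp [hxJ, hxI]) hw

theorem isEdgeOf_orderPolytope_of_connIn [Fintype α] {I J : Finset α} (hI : IsIdealF α I)
    (hJ : IsIdealF α J) (hIJ : I ⊆ J) (hconn : ConnIn α ↑(J \ I)) :
    IsEdgeOf α (orderPolytope α) (rho α I) (rho α J) := by
  obtain ⟨⟨w, hw⟩⟩ := hconn.nonempty
  refine ⟨fun h ↦ by simp [rho_injective h] at hw, ?_⟩
  rw [convexHull_pair]
  let D := ((J \ I) ×ˢ (J \ I)).filter fun q ↦ q.1 < q.2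
  refine isExposed_segment_of_tight convex_orderPolytope (rho_mem_orderPolytope hI)
    (rho_mem_orderPolytope hJ) ((I.disjSum Jᶜ).disjSum D)
    (Sum.elim (Sum.elim coordCLM (-coordCLM ·)) fun q ↦ coordCLM q.2 - coordCLM q.1)
    (Sum.elim (Sum.elim 1 0) 0) ?_ ?_ ?_ fun f hf htight ↦ ?_
  · rintro f hf ((x | x) | q) hi
    · simpa using (hf.1 x).2
    · simpa using (hf.1 x).1
    · simpa using hf.2 (Finset.mem_filter.1 (Finset.inr_mem_disjSum.1 hi)).2.le
  · rintro ((x | x) | q) hi <;> simp only [Finset.inl_mem_disjSum, Finset.inr_mem_disjSum,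
      Finset.mem_compl, Finset.mem_filter, Finset.mem_product, Finset.mem_sdiff, D] at hi
    · simp [rho, hi]
    · simp [rho, show x ∉ I from fun h ↦ hi (hIJ h)]
    · simp [rho, hi.1.1.2, hi.1.2.2]
  · rintro ((x | x) | q) hi <;> simp only [Finset.inl_mem_disjSum, Finset.inr_mem_disjSum,
      Finset.mem_compl, Finset.mem_filter, Finset.mem_product, Finset.mem_sdiff, D] at hi
    · simp [rho, hIJ hi]
    · simp [rho, hi]
    · simp [rho, hi.1.1.1, hi.1.2.1]
  · refine mem_segment_rho_of_connIn_sdiff hIJ hconn hf.1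
      (fun x hx ↦ by simpa using htight (.inl (.inl x)) (by simpa using hx))
      (fun x hx ↦ by simpa using htight (.inl (.inr x)) (by simpa using hx))
      fun x hx y hy hxy ↦ ?_
    have := htight (.inr (x, y)) (by simp_all [D])
    simp only [Sum.elim_inr, sub_apply, coordCLM_apply, Pi.zero_apply] at this
    linarith

theorem IsEdgeOf.subset_or_subset {I J : Finset α} (hI : IsIdealF α I) (hJ : IsIdealF α J)
    (hE : IsEdgeOf α (orderPolytope α) (rho α I) (rho α J)) : I ⊆ J ∨ J ⊆ I := by
  rcases hE.eq_or_eq_of_rho_add_rho (rho_mem_orderPolytope (hI.union hJ))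
    (rho_mem_orderPolytope (hI.inter hJ)) (rho_union_add_rho_inter I J) with h | h
  · exact .inr (Finset.union_eq_left.1 h)
  · exact .inl (Finset.union_eq_right.1 h)

theorem IsEdgeOf.connIn_sdiff {I J : Finset α} (hI : IsIdealF α I) (hJ : IsIdealF α J)
    (hIJ : I ⊆ J) (hE : IsEdgeOf α (orderPolytope α) (rho α I) (rho α J)) :
    ConnIn α ↑(J \ I) := by
  refine connIn_of_forall_exists_comparable
    (Finset.sdiff_nonempty.2 fun hJI ↦ hE.ne (subset_antisymm hIJ hJI)) fun U hU hUne hUW ↦ ?_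
  by_contra! hsep
  have hUI : ∀ x ∈ U, x ∈ J ∧ x ∉ I := fun x hx ↦ Finset.mem_sdiff.1 (hU hx)
  have hK : IsIdealF α (I ∪ U) := by
    intro x y hx hyx
    rcases Finset.mem_union.1 hx with hxI | hxU
    · exact Finset.mem_union_left U (hI hxI hyx)
    · by_contra hy
      simp only [Finset.mem_union, not_or] at hy
      exact (hsep x hxU y (by simp [hJ (hUI x hxU).1 hyx, hy])).2 hyx
  have hL : IsIdealF α (J \ U) := by
    intro x y hx hyx
    obtain ⟨hxJ, hxU⟩ := Finset.mem_sdiff.1 hx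
    refine Finset.mem_sdiff.2 ⟨hJ hxJ hyx, fun hyU ↦ ?_⟩
    by_cases hxI : x ∈ I
    · exact (hUI y hyU).2 (hI hxI hyx)
    · exact (hsep y hyU x (by simp [hxJ, hxI, hxU])).1 hyx
  have hsum : rho α (I ∪ U) + rho α (J \ U) = rho α I + rho α J := by
    rw [← rho_union_add_rho_inter, add_comm]
    congr 2 <;> ext x <;> grind
  rcases hE.eq_or_eq_of_rho_add_rho (rho_mem_orderPolytope hK) (rho_mem_orderPolytope hL)
    hsum with h | h
  · obtain ⟨u, hu⟩ := hUne
    exact (hUI u hu).2 (h ▸ Finset.mem_union_right I hu)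
  · refine hUW (subset_antisymm hU fun x hx ↦ ?_)
    grind

theorem mem_segment_rho_of_connIn_symmDiff {A B : Finset α} (hA : IsAntichainF α A)
    (hB : IsAntichainF α B) (hconn : ConnIn α ↑(symmDiff A B)) {f : α → ℝ}
    (hf : ∀ x, 0 ≤ f x ∧ f x ≤ 1) (hAB : ∀ x ∈ A, x ∈ B → f x = 1)
    (hout : ∀ x ∉ A, x ∉ B → f x = 0)
    (hcomp : ∀ x ∈ A \ B, ∀ y ∈ B \ A, x ≤ y ∨ y ≤ x → f x + f y = 1) :
    f ∈ segment ℝ (rho α A) (rho α B) := by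
  -- `A \ B` and `B \ A` are antichains, so every comparability inside `A △ B` is a cross pair
  let g : α → ℝ := fun x ↦ if x ∈ A then f x else 1 - f x
  have hg : ∀ x ∈ (↑(symmDiff A B) : Set α), ∀ y ∈ (↑(symmDiff A B) : Set α),
      x < y → g x = g y := by
    intro x hx y hy hxy
    rcases Finset.mem_symmDiff.1 hx with ⟨hxA, hxB⟩ | ⟨hxB, hxA⟩ <;>
      rcases Finset.mem_symmDiff.1 hy with ⟨hyA, hyB⟩ | ⟨hyB, hyA⟩
    · exact absurd hxy.le (hA hxA hyA hxy.ne)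
    · have := hcomp x (Finset.mem_sdiff.2 ⟨hxA, hxB⟩) y (Finset.mem_sdiff.2 ⟨hyB, hyA⟩)
        (.inl hxy.le)
      simp only [g, hxA, hyA, if_true, if_false]
      linarith
    · have := hcomp y (Finset.mem_sdiff.2 ⟨hyA, hyB⟩) x (Finset.mem_sdiff.2 ⟨hxB, hxA⟩)
        (.inr hxy.le)
      simp only [g, hxA, hyA, if_true, if_false]
      linarith
    · exact absurd hxy.le (hB hxB hyB hxy.ne)
  obtain ⟨⟨w, hw⟩⟩ := hconn.nonempty
  have hgw : 0 ≤ g w ∧ g w ≤ 1 := by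
    by_cases hwA : w ∈ A <;> simp only [g, hwA, if_true, if_false] <;> constructor <;>
      linarith [hf w]
  refine mem_segment_rho hgw.1 hgw.2 hAB (fun x hxA hxB ↦ ?_) (fun x hxB hxA ↦ ?_) hout
  · simpa [g, hxA] using hconn.apply_eq hg (Finset.mem_symmDiff.2 (.inl ⟨hxA, hxB⟩)) hw
  · have := hconn.apply_eq hg (Finset.mem_symmDiff.2 (.inr ⟨hxB, hxA⟩)) hw
    simp only [g, hxA, if_false] at this
    linarith

theorem isEdgeOf_chainPolytope_of_connIn [Fintype α] {A B : Finset α} (hA : IsAntichainF α A)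
    (hB : IsAntichainF α B) (hconn : ConnIn α ↑(symmDiff A B)) :
    IsEdgeOf α (chainPolytope α) (rho α A) (rho α B) := by
  obtain ⟨⟨w, hw⟩⟩ := hconn.nonempty
  refine ⟨fun h ↦ by simp [rho_injective h] at hw, ?_⟩
  rw [convexHull_pair]
  let D := ((A \ B) ×ˢ (B \ A)).filter fun q ↦ q.1 ≤ q.2 ∨ q.2 ≤ q.1
  have hD : ∀ {q}, q ∈ D → (q.1 ∈ A ∧ q.1 ∉ B) ∧ (q.2 ∈ B ∧ q.2 ∉ A) ∧
      (q.1 ≤ q.2 ∨ q.2 ≤ q.1) := by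
    intro q hq
    simpa [D, and_assoc] using hq
  refine isExposed_segment_of_tight convex_chainPolytope (rho_mem_chainPolytope hA)
    (rho_mem_chainPolytope hB) (((A ∩ B).disjSum (A ∪ B)ᶜ).disjSum D)
    (Sum.elim (Sum.elim coordCLM (-coordCLM ·)) fun q ↦ coordCLM q.1 + coordCLM q.2)
    (Sum.elim (Sum.elim 1 0) 1) ?_ ?_ ?_ fun f hf htight ↦ ?_
  · rintro f hf ((x | x) | q) hi
    · simpa using le_one_of_mem_chainPolytope hf x
    · simpa using hf.1 x
    · obtain ⟨⟨hq₁, -⟩, ⟨-, hq₂⟩, hcomp⟩ := hD (Finset.inr_mem_disjSum.1 hi)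
      simpa using add_le_one_of_mem_chainPolytope hf (fun h : q.1 = q.2 ↦ hq₂ (h ▸ hq₁)) hcomp
  · rintro ((x | x) | q) hi <;> simp only [Finset.inl_mem_disjSum, Finset.inr_mem_disjSum,
      Finset.mem_inter, Finset.mem_compl, Finset.mem_union, not_or] at hi
    · simp [rho, hi.1]
    · simp [rho, hi.1]
    · simp [rho, (hD hi).1.1, (hD hi).2.1.2]
  · rintro ((x | x) | q) hi <;> simp only [Finset.inl_mem_disjSum, Finset.inr_mem_disjSum,
      Finset.mem_inter, Finset.mem_compl, Finset.mem_union, not_or] at hi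
    · simp [rho, hi.2]
    · simp [rho, hi.2]
    · simp [rho, (hD hi).1.2, (hD hi).2.1.1]
  · refine mem_segment_rho_of_connIn_symmDiff hA hB hconn
      (fun x ↦ ⟨hf.1 x, le_one_of_mem_chainPolytope hf x⟩)
      (fun x hxA hxB ↦ by simpa using htight (.inl (.inl x)) (by simp [hxA, hxB]))
      (fun x hxA hxB ↦ by simpa using htight (.inl (.inr x)) (by simp [hxA, hxB]))
      fun x hx y hy hxy ↦ by simpa using htight (.inr (x, y)) (by simp_all [D])


theorem not_isEdgeOf_chainPolytope_empty {B : Finset α} (hB : IsAntichainF α B)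
    (hcard : 2 ≤ B.card) : ¬ IsEdgeOf α (chainPolytope α) (rho α ∅) (rho α B) := by
  intro hE
  obtain ⟨b, hb⟩ : B.Nonempty := Finset.card_pos.1 (by omega)
  have hsub : ∀ C ⊆ B, IsAntichainF α C := fun C hC ↦ hB.subset (by exact_mod_cast hC)
  have hsum : rho α {b} + rho α (B.erase b) = rho α ∅ + rho α B := by
    rw [← rho_union_add_rho_inter, add_comm]
    congr 2
    · simp
    · simp [Finset.insert_erase hb]
  rcases hE.eq_or_eq_of_rho_add_rho (rho_mem_chainPolytope (hsub _ (by simpa using hb)))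
    (rho_mem_chainPolytope (hsub _ (Finset.erase_subset b B))) hsum with h | h
  · exact Finset.singleton_ne_empty b h
  · simp [← h] at hcard

end

section
variable {α : Type*} [Fintype α] [PartialOrder α]

theorem maxSet_empty : maxSet α ∅ = ∅ := by
  simp [maxSet]

theorem isAntichainF_maxSet (W : Finset α) : IsAntichainF α (maxSet α W) :=
  fun _ hx y hy hxy hle ↦ (Finset.mem_filter.1 hx).2 y (Finset.mem_filter.1 hy).1 (hle.lt_of_ne hxy)

theorem EstarO.symm {I J : Finset α} (h : EstarO α I J) : EstarO α J I :=
  ⟨h.2.1, h.1, h.2.2.1.symm, h.2.2.2.1.symm, fun hC ↦ h.2.2.2.2 hC.symm⟩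

variable {β : Type*} [LinearOrder β] {r : α → β}

theorem mem_maxSet_iff_of_rank (hr : ∀ x y : α, x < y ↔ r x < r y) {W : Finset α} {x : α} :
    x ∈ maxSet α W ↔ x ∈ W ∧ ∀ y ∈ W, r y ≤ r x := by
  simp [maxSet, hr]

theorem connIn_symmDiff_maxSet (hr : ∀ x y : α, x < y ↔ r x < r y) {I J : Finset α}
    (hI : IsIdealF α I) (hIJ : I ⊆ J) (hconn : ConnIn α ↑(J \ I))
    (h : I.Nonempty ∨ (maxSet α J).card ≤ 1) :
    ConnIn α ↑(symmDiff (maxSet α I) (maxSet α J)) := by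
  obtain ⟨⟨w, hw⟩⟩ := hconn.nonempty
  obtain ⟨y, hyJ, hymax⟩ := J.exists_max_image r ⟨w, (Finset.mem_sdiff.1 hw).1⟩
  have hy : y ∈ maxSet α J := (mem_maxSet_iff_of_rank hr).2 ⟨hyJ, hymax⟩
  rcases I.eq_empty_or_nonempty with rfl | hIne
  · have hcard := h.resolve_left Finset.not_nonempty_empty
    have hJy : maxSet α J = {y} :=
      Finset.eq_singleton_iff_unique_mem.2 ⟨hy, fun z hz ↦ Finset.card_le_one.1 hcard z hz y hy⟩
    rw [maxSet_empty, ← Finset.bot_eq_empty, bot_symmDiff, hJy, Finset.coe_singleton]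
    exact connIn_singleton y
  obtain ⟨x, hxI, hxmax⟩ := I.exists_max_image r hIne
  have hx : x ∈ maxSet α I := (mem_maxSet_iff_of_rank hr).2 ⟨hxI, hxmax⟩
  rcases (hymax x (hIJ hxI)).lt_or_eq with hlt | heq
  · refine connIn_of_rank_ne hr (Finset.mem_symmDiff.2 (.inl ⟨hx, fun hx' ↦ ?_⟩))
      (Finset.mem_symmDiff.2 (.inr ⟨hy, fun hy' ↦ ?_⟩)) hlt.ne
    · exact hlt.not_ge (((mem_maxSet_iff_of_rank hr).1 hx').2 y hyJ)
    · exact hlt.not_ge (hxmax y ((mem_maxSet_iff_of_rank hr).1 hy').1)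
  · -- below the common top rank, `J` lies under `x`, hence in `I`: so `max I △ max J = J \ I`
    have hbelow : ∀ z ∈ J, z ∉ I → r x ≤ r z := fun z hzJ hzI ↦
      not_lt.1 fun hzx ↦ hzI (hI hxI ((hr z x).2 hzx).le)
    convert hconn using 2
    ext z
    simp only [Finset.mem_symmDiff, mem_maxSet_iff_of_rank hr, Finset.mem_sdiff]
    grind

theorem estarO_iff_of_subset (hr : ∀ x y : α, x < y ↔ r x < r y) {I J : Finset α}
    (hJ : IsIdealF α J) (hIJ : I ⊆ J) :
    EstarO α I J ↔ I = ∅ ∧ ConnIn α ↑J ∧ 2 ≤ (maxSet α J).card := by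
  constructor
  · rintro ⟨hI, -, -, hO, hC⟩
    have hconn := hO.connIn_sdiff hI hJ hIJ
    have hedge := fun h ↦ isEdgeOf_chainPolytope_of_connIn (isAntichainF_maxSet I)
      (isAntichainF_maxSet J) (connIn_symmDiff_maxSet hr hI hIJ hconn h)
    obtain rfl : I = ∅ := Finset.not_nonempty_iff_eq_empty.1 fun hIne ↦ hC (hedge (.inl hIne))
    exact ⟨rfl, by simpa using hconn, not_lt.1 fun hcard ↦ hC (hedge (.inr (by omega)))⟩
  · rintro ⟨rfl, hconn, hcard⟩
    have hO := isEdgeOf_orderPolytope_of_connIn isIdealF_empty hJ (Finset.empty_subset J)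
      (by simpa using hconn)
    refine ⟨isIdealF_empty, hJ, hO.ne, hO, ?_⟩
    rw [maxSet_empty]
    exact not_isEdgeOf_chainPolytope_empty (isAntichainF_maxSet J) hcard

end

theorem mem_EstarO_iff
    (r : P → ℕ) (n : ℕ) (hr : IsMaxRanked P r n)
    (I J : Finset P) (hI : IsIdealF P I) (hJ : IsIdealF P J) :
    EstarO P I J ↔
      ((I = ∅ ∧ ConnIn P (↑J) ∧ 2 ≤ (maxSet P J).card) ∨
       (J = ∅ ∧ ConnIn P (↑I) ∧ 2 ≤ (maxSet P I).card)) := by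
  have hrank := hr.2.2
  constructor
  · intro h
    rcases h.2.2.2.1.subset_or_subset hI hJ with hIJ | hJI
    · exact .inl ((estarO_iff_of_subset hrank hJ hIJ).1 h)
    · exact .inr ((estarO_iff_of_subset hrank hI hJI).1 h.symm)
  · rintro (h | h)
    · exact (estarO_iff_of_subset hrank hJ (h.1 ▸ Finset.empty_subset J)).2 h
    · exact ((estarO_iff_of_subset hrank hI (h.1 ▸ Finset.empty_subset I)).2 h).symm
end

section
/- Let P be a maximal ranked poset of rank n. Let J ⊆ K and J' ⊆ K' be nonempty poset ideals of P with max(J) ⊆ P_j, max(K) ⊆ P_k, max(J') ⊆ P_{j'}, max(K') ⊆ P_{k'}, |max(J)| = |max(J')| = 1, k − j = 1, and k' − j' = 1. If P_{k−1} = P_{k'−1}, min(K ∖ J) = min(K' ∖ J'), and max(K) = max(K'), then J = J' and K = K', where min(W) denotes the set of minimal elements of a subset W of P. -/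
open Finset
open scoped Classical

variable (P : Type*) [Fintype P] [PartialOrder P]

lemma maxSet_subset_self (W : Finset P) : maxSet P W ⊆ W := filter_subset _ _

lemma ideal_struct (r : P → ℕ) (n : ℕ) (hr : IsMaxRanked P r n)
    (I : Finset P) (hI : IsIdealF P I) (hne : I.Nonempty)
    (m : ℕ) (hm : maxSet P I ⊆ level P r m) :
    (∀ x ∈ I, r x ≤ m) ∧ (∀ x, r x < m → x ∈ I) ∧
      maxSet P I = I.filter (fun x => r x = m) := by
  obtain ⟨y, hyI, hymax⟩ := I.exists_max_image r hne
  have hyM : y ∈ maxSet P I := by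
    simp only [maxSet, mem_filter]
    exact ⟨hyI, fun z hz hlt => absurd ((hr.2.2 y z).1 hlt) (not_lt.2 (hymax z hz))⟩
  have hry : r y = m := by simpa [level] using hm hyM
  have hle : ∀ x ∈ I, r x ≤ m := fun x hx => hry ▸ hymax x hx
  refine ⟨hle, fun x hx => ?_, ?_⟩
  · exact hI hyI (le_of_lt ((hr.2.2 x y).2 (by omega)))
  · ext x
    simp only [maxSet, mem_filter]
    constructor
    · rintro ⟨hxI, hmax⟩
      refine ⟨hxI, ?_⟩
      rcases lt_or_eq_of_le (hle x hxI) with h | h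
      · exact absurd ((hr.2.2 x y).2 (by omega)) (hmax y hyI)
      · exact h
    · rintro ⟨hxI, hxm⟩
      refine ⟨hxI, fun z hz hlt => ?_⟩
      have h1 := (hr.2.2 x z).1 hlt
      have h2 := hle z hz
      omega

/-- injectivity in Case 3: with `J ⊆ K`, `J' ⊆ K'` nonempty poset
ideals, `|max J| = |max J'| = 1`, `k = j + 1`, `k' = j' + 1`, if
`P_{k-1} = P_{k'-1}`, `min(K \ J) = min(K' \ J')` and `max K = max K'`,
then `J = J'` and `K = K'`. -/
theorem case3_injective
    (r : P → ℕ) (n : ℕ) (hr : IsMaxRanked P r n)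
    (J K J' K' : Finset P)
    (hJ : IsIdealF P J) (hK : IsIdealF P K) (hJ' : IsIdealF P J') (hK' : IsIdealF P K')
    (hJne : J.Nonempty) (hKne : K.Nonempty) (hJne' : J'.Nonempty) (hKne' : K'.Nonempty)
    (hJK : J ⊆ K) (hJK' : J' ⊆ K')
    (j k j' k' : ℕ)
    (hj : maxSet P J ⊆ level P r j) (hk : maxSet P K ⊆ level P r k)
    (hj' : maxSet P J' ⊆ level P r j') (hk' : maxSet P K' ⊆ level P r k')
    (hmaxJ : (maxSet P J).card = 1) (hmaxJ' : (maxSet P J').card = 1)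
    (hkj : k = j + 1) (hkj' : k' = j' + 1)
    (e1 : level P r (k - 1) = level P r (k' - 1))
    (e2 : minSet P (K \ J) = minSet P (K' \ J'))
    (e3 : maxSet P K = maxSet P K') :
    J = J' ∧ K = K' := by
  obtain ⟨hKle, hKlt, hKmax⟩ := ideal_struct P r n hr K hK hKne k hk
  obtain ⟨hKle', hKlt', hKmax'⟩ := ideal_struct P r n hr K' hK' hKne' k' hk'
  obtain ⟨hJle, hJlt, hJmax⟩ := ideal_struct P r n hr J hJ hJne j hj
  obtain ⟨hJle', hJlt', hJmax'⟩ := ideal_struct P r n hr J' hJ' hJne' j' hj'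
  obtain ⟨a, ha⟩ := Finset.card_eq_one.1 hmaxJ
  obtain ⟨a', ha'⟩ := Finset.card_eq_one.1 hmaxJ'
  have haM : a ∈ maxSet P J := ha.symm ▸ mem_singleton_self a
  have haM' : a' ∈ maxSet P J' := ha'.symm ▸ mem_singleton_self a'
  have haJ : a ∈ J := maxSet_subset_self P J haM
  have haJ'' : a' ∈ J' := maxSet_subset_self P J' haM'
  have hra : r a = j := by simpa [level] using hj haM
  have hra' : r a' = j' := by simpa [level] using hj' haM'
  have hk1 : k - 1 = j := by omega
  have hk1' : k' - 1 = j' := by omega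
  rw [hk1, hk1'] at e1
  have hjj : j = j' := by
    have : a' ∈ level P r j := e1.symm ▸ (hj' haM')
    have : r a' = j := by simpa [level] using this
    omega
  have hkk : k = k' := by omega
  have hKK : K = K' := by
    ext x
    have h1 : x ∈ K ↔ r x < k ∨ x ∈ maxSet P K := by
      constructor
      · intro hx
        rcases lt_or_eq_of_le (hKle x hx) with h | h
        · exact Or.inl h
        · exact Or.inr (hKmax ▸ mem_filter.2 ⟨hx, h⟩)
      · rintro (h | h)
        · exact hKlt x h
        · exact maxSet_subset_self P K h
    have h2 : x ∈ K' ↔ r x < k' ∨ x ∈ maxSet P K' := by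
      constructor
      · intro hx
        rcases lt_or_eq_of_le (hKle' x hx) with h | h
        · exact Or.inl h
        · exact Or.inr (hKmax' ▸ mem_filter.2 ⟨hx, h⟩)
      · rintro (h | h)
        · exact hKlt' x h
        · exact maxSet_subset_self P K' h
    rw [h1, h2, hkk, e3]
  have haa : a = a' := by
    by_contra hne
    -- a ∈ K' \ J' and is minimal there
    have haK' : a ∈ K' := hKlt' a (by omega)
    have haJ' : a ∉ J' := by
      intro hmem
      have : a ∈ maxSet P J' := hJmax' ▸ mem_filter.2 ⟨hmem, by omega⟩
      rw [ha'] at this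
      exact hne (mem_singleton.1 this)
    have hamin : a ∈ minSet P (K' \ J') := by
      simp only [minSet, mem_filter]
      refine ⟨mem_sdiff.2 ⟨haK', haJ'⟩, fun z hz hlt => ?_⟩
      have hrz : r z < r a := (hr.2.2 z a).1 hlt
      exact (mem_sdiff.1 hz).2 (hJlt' z (by omega))
    rw [← e2] at hamin
    have : a ∈ K \ J := mem_of_mem_filter a hamin
    exact (mem_sdiff.1 this).2 haJ
  have hJJ : J = J' := by
    ext x
    have h1 : x ∈ J ↔ r x < j ∨ x = a := by
      constructor
      · intro hx
        rcases lt_or_eq_of_le (hJle x hx) with h | h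
        · exact Or.inl h
        · have : x ∈ maxSet P J := hJmax ▸ mem_filter.2 ⟨hx, h⟩
          exact Or.inr (mem_singleton.1 (ha ▸ this))
      · rintro (h | rfl)
        · exact hJlt x h
        · exact haJ
    have h2 : x ∈ J' ↔ r x < j' ∨ x = a' := by
      constructor
      · intro hx
        rcases lt_or_eq_of_le (hJle' x hx) with h | h
        · exact Or.inl h
        · have : x ∈ maxSet P J' := hJmax' ▸ mem_filter.2 ⟨hx, h⟩
          exact Or.inr (mem_singleton.1 (ha' ▸ this))
      · rintro (h | rfl)
        · exact hJlt' x h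
        · exact haJ''
    rw [h1, h2, hjj, haa]
  exact ⟨hJJ, hKK⟩
end

section
/- Let P be a maximal ranked poset of rank n. Then P contains an X-poset as a subposet if and only if there exist integers s and t with 2 ≤ t ≤ s ≤ n such that |P_s| ≥ 2 and |P_{s−t}| ≥ 2. -/
open Finset
open scoped Classical

variable (P : Type*) [Fintype P] [PartialOrder P]

/-- A maximal ranked poset of rank `n` contains an `X`-poset as a
subposet iff there are `2 ≤ t ≤ s ≤ n` with `|P_s| ≥ 2` and `|P_{s-t}| ≥ 2`. -/
theorem containsX_iff
    (r : P → ℕ) (n : ℕ) (hr : IsMaxRanked P r n) :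
    ContainsX P ↔
      ∃ s t : ℕ, 2 ≤ t ∧ t ≤ s ∧ s ≤ n ∧
        2 ≤ (level P r s).card ∧ 2 ≤ (level P r (s - t)).card := by
  obtain ⟨hle, hsurj, hlt⟩ := hr
  constructor
  · rintro ⟨a,b,c,d,e, hab,hac,had,hae,hbc,hbd,hbe,hcd,hce,hde,
      hac',hbc',hcd',hce', hnab,hnba,hnde,hned⟩
    have hra : r a = r b := by
      rcases lt_trichotomy (r a) (r b) with h|h|h
      · exact absurd ((hlt a b).2 h).le hnab
      · exact h
      · exact absurd ((hlt b a).2 h).le hnba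
    have hrd : r d = r e := by
      rcases lt_trichotomy (r d) (r e) with h|h|h
      · exact absurd ((hlt d e).2 h).le hnde
      · exact h
      · exact absurd ((hlt e d).2 h).le hned
    have h1 : r a < r c := (hlt a c).1 hac'
    have h2 : r c < r d := (hlt c d).1 hcd'
    refine ⟨r d, r d - r a, by omega, Nat.sub_le _ _, hle d, ?_, ?_⟩
    · have hsub : ({d, e} : Finset P) ⊆ level P r (r d) := by
        intro x hx
        simp only [Finset.mem_insert, Finset.mem_singleton] at hx
        rcases hx with rfl|rfl <;> simp [level, hrd]
      calc 2 = ({d,e}:Finset P).card := (Finset.card_pair hde).symm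
        _ ≤ _ := Finset.card_le_card hsub
    · have hsub0 : r d - (r d - r a) = r a := by omega
      rw [hsub0]
      have hsub : ({a, b} : Finset P) ⊆ level P r (r a) := by
        intro x hx
        simp only [Finset.mem_insert, Finset.mem_singleton] at hx
        rcases hx with rfl|rfl <;> simp [level, hra]
      calc 2 = ({a,b}:Finset P).card := (Finset.card_pair hab).symm
        _ ≤ _ := Finset.card_le_card hsub
  · rintro ⟨s, t, ht2, hts, hsn, hs, hst⟩
    obtain ⟨c, hc⟩ := hsurj (s-1) (by omega)
    obtain ⟨d, hd, e, he, hde⟩ := Finset.one_lt_card.1 hs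
    obtain ⟨a, ha, b, hb, hab⟩ := Finset.one_lt_card.1 hst
    simp only [level, Finset.mem_filter] at hd he ha hb
    have hrd := hd.2; have hre := he.2; have hra := ha.2; have hrb := hb.2
    have incomp : ∀ x y : P, r x = r y → x ≠ y → ¬ x ≤ y := by
      intro x y hxy hne hle'
      rcases lt_or_eq_of_le hle' with h|h
      · have := (hlt x y).1 h; omega
      · exact hne h
    refine ⟨a,b,c,d,e, hab, ?_, ?_, ?_, ?_, ?_, ?_, ?_, ?_, hde,
      (hlt a c).2 (by omega), (hlt b c).2 (by omega),
      (hlt c d).2 (by omega), (hlt c e).2 (by omega),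
      incomp a b (by omega) hab, incomp b a (by omega) hab.symm,
      incomp d e (by omega) hde, incomp e d (by omega) hde.symm⟩
    all_goals (intro h; subst h; omega)
end
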